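/- Every nonempty compact, metrizable, totally disconnected topological space is a retract of the Cantor set, i.e., there exist continuous maps σ : X → 2^ℕ and ρ : 2^ℕ → X with ρ ∘ σ = id_X. -/

import Mathlib

/-!
A compact, second-countable, totally disconnected Hausdorff space has only countably many clopen
sets, and they separate points; their indicator functions therefore give a closed embedding
`σ : X → ℕ → Bool`. The nonempty closed set `range σ` is a retract of the Cantor space
(`PiNat.exists_retraction_of_isClosed`), and following that retraction by `σ⁻¹` yields `ρ`.
-/

open Topology TopologicalSpace

theorem exists_isClosedEmbedding_nat_bool (X : Type*) [TopologicalSpace X] [CompactSpace X]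
    [T2Space X] [TotallyDisconnectedSpace X] [SecondCountableTopology X] :
    ∃ σ : X → ℕ → Bool, IsClosedEmbedding σ := by
  have : Countable (Clopens X) := Clopens.countable_iff_secondCountable.mpr ‹_›
  obtain ⟨U, hU⟩ := exists_surjective_nat (Clopens X)
  refine ⟨fun x n => (U n : Set X).boolIndicator x, Continuous.isClosedEmbedding ?_ ?_⟩
  · exact continuous_pi fun n => (continuous_boolIndicator_iff_isClopen _).mpr (U n).isClopen
  · intro x y hxy
    by_contra hne
    obtain ⟨K, hK, hxK, hyK⟩ := exists_isClopen_of_totally_separated hne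
    obtain ⟨n, hn⟩ := hU ⟨K, hK⟩
    have h : K.boolIndicator x = K.boolIndicator y := by simpa [hn] using congr_fun hxy n
    rw [(K.mem_iff_boolIndicator x).mp hxK, (K.notMem_iff_boolIndicator y).mp hyK] at h
    exact Bool.noConfusion h

theorem PiNat.exists_continuous_leftInverse_of_isClosedEmbedding {X : Type*}
    [TopologicalSpace X] [Nonempty X] {E : ℕ → Type*} [∀ n, TopologicalSpace (E n)]
    [∀ n, DiscreteTopology (E n)] {σ : X → ∀ n, E n} (hσ : IsClosedEmbedding σ) :
    ∃ ρ : (∀ n, E n) → X, Continuous ρ ∧ ρ ∘ σ = id := by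
  obtain ⟨r, hr, -, hr_cont⟩ :=
    exists_retraction_subtype_of_isClosed hσ.isClosed_range (Set.range_nonempty σ)
  let e : X ≃ₜ Set.range σ := hσ.toHomeomorph
  refine ⟨e.symm ∘ r, e.symm.continuous.comp hr_cont, funext fun x => ?_⟩
  have : r (σ x) = e x := hr ⟨σ x, x, rfl⟩
  simp [this]

theorem stmt_14 (X : Type*) [TopologicalSpace X] [Nonempty X] [CompactSpace X]
    [TopologicalSpace.MetrizableSpace X] [TotallyDisconnectedSpace X] :
    ∃ (σ : X → (ℕ → Bool)) (ρ : (ℕ → Bool) → X),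
      Continuous σ ∧ Continuous ρ ∧ ρ ∘ σ = id := by
  obtain ⟨σ, hσ⟩ := exists_isClosedEmbedding_nat_bool X
  obtain ⟨ρ, hρ, hρσ⟩ := PiNat.exists_continuous_leftInverse_of_isClosedEmbedding hσ
  exact ⟨σ, ρ, hσ.continuous, hρ, hρσ⟩
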